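/- Let (H,B₁,B₂) be a Rota-Baxter system of Hopf algebras with descendent Hopf algebra H_{B₁,B₂} = (Im(σ), ∘, 1, Δ, ε, T). Then B₁ and B₂ are Hopf algebra homomorphisms from H_{B₁,B₂} to H, and Im(B₁) and Im(B₂) are Hopf subalgebras of H. -/

import Mathlib

/-!
Multiplicativity of `Bᵢ` on `(H, ∘)` is the Rota–Baxter identity itself. For the antipodes, work
in the convolution monoid of linear endomorphisms of `H`: for any coalgebra map `φ`, `S ∘ φ` is a
left convolution inverse of `φ`. If `φ` is also multiplicative from `(H, ∘)` to `H`, then `φ ∘ T`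
is a right inverse, since `a₁ ∘ T(a₂) = (B₁ ∗ T ∗ S B₂)(a) = ((B₁ ∗ S B₁) ∗ (B₂ ∗ S B₂))(a) = ε(a)`
by cocommutativity. Hence `φ ∘ T = S ∘ φ`, which also makes `Im φ` stable under `S`.
-/

open TensorProduct Coalgebra HopfAlgebra LinearMap

variable {F : Type*} [Field F] {H : Type*} [Ring H] [HopfAlgebra F H]

/-- The descendent operation `a ⊗ b ↦ B₁(a₁) b S(B₂(a₂))` as a linear map on `H ⊗ H`. -/
noncomputable def circL (B₁ B₂ : H →ₗ[F] H) : H ⊗[F] H →ₗ[F] H :=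
  (LinearMap.mul' F H)
    ∘ₗ (TensorProduct.map ((LinearMap.mul' F H) ∘ₗ TensorProduct.map B₁ LinearMap.id)
        ((antipode (R := F)) ∘ₗ B₂))
    ∘ₗ (TensorProduct.assoc F H H H).symm.toLinearMap
    ∘ₗ (TensorProduct.map LinearMap.id (TensorProduct.comm F H H).toLinearMap)
    ∘ₗ (TensorProduct.assoc F H H H).toLinearMap
    ∘ₗ (TensorProduct.map Coalgebra.comul LinearMap.id)

/-- The descendent operation `a ∘ b = B₁(a₁) b S(B₂(a₂))`. -/
noncomputable def circ (B₁ B₂ : H →ₗ[F] H) (a b : H) : H := circL B₁ B₂ (a ⊗ₜ[F] b)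

/-- The cocycle `σ = B₁ ∗ (S ∘ B₂)`, i.e. `σ(a) = B₁(a₁) S(B₂(a₂))`. -/
noncomputable def cocycleL (B₁ B₂ : H →ₗ[F] H) : H →ₗ[F] H :=
  (LinearMap.mul' F H) ∘ₗ (TensorProduct.map B₁ ((antipode (R := F)) ∘ₗ B₂)) ∘ₗ Coalgebra.comul

/-- `(H, B₁, B₂)` is a Rota-Baxter system of Hopf algebras: `B₁, B₂` are coalgebra
homomorphisms sending `1` to `1` such that `Bᵢ(a)Bᵢ(b) = Bᵢ(B₁(a₁) b S(B₂(a₂)))`. -/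
noncomputable def IsRBSystem (B₁ B₂ : H →ₗ[F] H) : Prop :=
  (Coalgebra.comul ∘ₗ B₁ = TensorProduct.map B₁ B₁ ∘ₗ Coalgebra.comul) ∧
  (Coalgebra.counit ∘ₗ B₁ = Coalgebra.counit (R := F)) ∧
  (Coalgebra.comul ∘ₗ B₂ = TensorProduct.map B₂ B₂ ∘ₗ Coalgebra.comul) ∧
  (Coalgebra.counit ∘ₗ B₂ = Coalgebra.counit (R := F)) ∧
  B₁ 1 = 1 ∧ B₂ 1 = 1 ∧
  (∀ a b : H, B₁ a * B₁ b = B₁ (circ B₁ B₂ a b)) ∧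
  (∀ a b : H, B₂ a * B₂ b = B₂ (circ B₁ B₂ a b))

/-- The map `T(a) = S(B₁(a₁)) B₂(a₂)` as a linear map on `H`. -/
noncomputable def TL (B₁ B₂ : H →ₗ[F] H) : H →ₗ[F] H :=
  (LinearMap.mul' F H) ∘ₗ (TensorProduct.map ((antipode (R := F)) ∘ₗ B₁) B₂) ∘ₗ Coalgebra.comul

open WithConv

section Convolution

variable {R A B : Type*} [CommSemiring R] [Semiring A] [Semiring B] [HopfAlgebra R A]
  [HopfAlgebra R B]

theorem LinearMap.antipode_comp_convMul_self (φ : A →ₗc[R] B) :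
    toConv (antipode R ∘ₗ (φ : A →ₗ[R] B)) * toConv (φ : A →ₗ[R] B) = 1 := by
  apply ofConv_injective
  rw [← convOne_comp_coalgHom φ, ← antipode_mul_id, convMul_comp_coalgHom_distrib]
  rfl

theorem LinearMap.self_convMul_antipode_comp (φ : A →ₗc[R] B) :
    toConv (φ : A →ₗ[R] B) * toConv (antipode R ∘ₗ (φ : A →ₗ[R] B)) = 1 := by
  apply ofConv_injective
  rw [← convOne_comp_coalgHom φ, ← id_mul_antipode, convMul_comp_coalgHom_distrib]
  rfl

end Convolution

theorem toConv_TL (B₁ B₂ : H →ₗ[F] H) :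
    toConv (TL B₁ B₂) = toConv (antipode F ∘ₗ B₁) * toConv B₂ := rfl

-- `a₁ ∘ g(a₂) = B₁(a₁) g(a₃) S(B₂(a₂))`: cocommutativity swaps `a₂` and `a₃`.
theorem circL_comp_lTensor_comp_comul [IsCocomm F H] (B₁ B₂ g : H →ₗ[F] H) :
    toConv (circL B₁ B₂ ∘ₗ lTensor H g ∘ₗ comul) =
      toConv B₁ * toConv g * toConv (antipode F ∘ₗ B₂) := by
  simp only [circL, LinearMap.convMul_def, coassoc_simps]

theorem circL_comp_lTensor_TL_comp_comul [IsCocomm F H] (B₁ B₂ : H →ₗc[F] H) :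
    circL B₁ B₂ ∘ₗ lTensor H (TL B₁ B₂) ∘ₗ comul = (1 : WithConv (H →ₗ[F] H)).ofConv := by
  apply toConv_injective
  rw [toConv_ofConv, circL_comp_lTensor_comp_comul, toConv_TL, ← mul_assoc,
    self_convMul_antipode_comp, one_mul, self_convMul_antipode_comp]

theorem comp_TL_eq_antipode_comp [IsCocomm F H] (B₁ B₂ φ : H →ₗc[F] H) (hφ₁ : φ 1 = 1)
    (hφ : ∀ a b, φ a * φ b = φ (circ (F := F) B₁ B₂ a b)) :
    (φ : H →ₗ[F] H) ∘ₗ TL B₁ B₂ = antipode F ∘ₗ φ := by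
  have hφ_circL : mul' F H ∘ₗ map (φ : H →ₗ[F] H) φ = (φ : H →ₗ[F] H) ∘ₗ circL B₁ B₂ :=
    TensorProduct.ext' hφ
  have h_inv : toConv (φ : H →ₗ[F] H) * toConv ((φ : H →ₗ[F] H) ∘ₗ TL B₁ B₂) = 1 := by
    calc _ = toConv ((φ : H →ₗ[F] H) ∘ₗ circL B₁ B₂ ∘ₗ lTensor H (TL B₁ B₂) ∘ₗ comul) := by
          rw [LinearMap.convMul_def, ← map_comp_lTensor]
          simp only [← comp_assoc, hφ_circL]
      _ = 1 := by
          rw [circL_comp_lTensor_TL_comp_comul]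
          ext a
          simp [Algebra.algebraMap_eq_smul_one, hφ₁]
  exact (congrArg ofConv (left_inv_eq_right_inv (antipode_comp_convMul_self φ) h_inv)).symm

/-- `B₁` and `B₂` are Hopf algebra homomorphisms from the descendent Hopf algebra
`H_{B₁,B₂} = (Im σ, ∘, 1, Δ, ε, T)` to `H`, and `Im(B₁)`, `Im(B₂)` are Hopf
subalgebras of `H`. -/
theorem B_hopfHom_and_image_hopfSubalgebra
    (hcc : ∀ a : H, (TensorProduct.comm F H H) (Coalgebra.comul a) = Coalgebra.comul a)
    (B₁ B₂ : H →ₗ[F] H) (hRB : IsRBSystem B₁ B₂) :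
    -- B₁ and B₂ are multiplicative from (Im σ, ∘) to (H, ·) and intertwine the antipodes
    (∀ a b : H, B₁ (circ B₁ B₂ (cocycleL B₁ B₂ a) (cocycleL B₁ B₂ b)) =
      B₁ (cocycleL B₁ B₂ a) * B₁ (cocycleL B₁ B₂ b)) ∧
    (∀ a : H, B₁ (TL B₁ B₂ (cocycleL B₁ B₂ a)) = antipode (R := F) (B₁ (cocycleL B₁ B₂ a))) ∧
    (∀ a b : H, B₂ (circ B₁ B₂ (cocycleL B₁ B₂ a) (cocycleL B₁ B₂ b)) =
      B₂ (cocycleL B₁ B₂ a) * B₂ (cocycleL B₁ B₂ b)) ∧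
    (∀ a : H, B₂ (TL B₁ B₂ (cocycleL B₁ B₂ a)) = antipode (R := F) (B₂ (cocycleL B₁ B₂ a))) ∧
    -- Im(B₁) is a Hopf subalgebra of H
    ((1 : H) ∈ LinearMap.range B₁ ∧
     (∀ x ∈ LinearMap.range B₁, ∀ y ∈ LinearMap.range B₁, x * y ∈ LinearMap.range B₁) ∧
     (∀ x ∈ LinearMap.range B₁,
        Coalgebra.comul x ∈ LinearMap.range (TensorProduct.map B₁ B₁)) ∧
     (∀ x ∈ LinearMap.range B₁, antipode (R := F) x ∈ LinearMap.range B₁)) ∧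
    -- Im(B₂) is a Hopf subalgebra of H
    ((1 : H) ∈ LinearMap.range B₂ ∧
     (∀ x ∈ LinearMap.range B₂, ∀ y ∈ LinearMap.range B₂, x * y ∈ LinearMap.range B₂) ∧
     (∀ x ∈ LinearMap.range B₂,
        Coalgebra.comul x ∈ LinearMap.range (TensorProduct.map B₂ B₂)) ∧
     (∀ x ∈ LinearMap.range B₂, antipode (R := F) x ∈ LinearMap.range B₂)) := by
  obtain ⟨hΔ₁, hε₁, hΔ₂, hε₂, h₁, h₂, hmul₁, hmul₂⟩ := hRB
  have : IsCocomm F H := ⟨LinearMap.ext hcc⟩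
  let C₁ : H →ₗc[F] H := ⟨B₁, hε₁, hΔ₁.symm⟩
  let C₂ : H →ₗc[F] H := ⟨B₂, hε₂, hΔ₂.symm⟩
  have hT₁ : B₁ ∘ₗ TL B₁ B₂ = antipode F ∘ₗ B₁ := comp_TL_eq_antipode_comp C₁ C₂ C₁ h₁ hmul₁
  have hT₂ : B₂ ∘ₗ TL B₁ B₂ = antipode F ∘ₗ B₂ := comp_TL_eq_antipode_comp C₁ C₂ C₂ h₂ hmul₂
  refine ⟨fun a b => (hmul₁ _ _).symm, fun a => congr($hT₁ (cocycleL B₁ B₂ a)),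
    fun a b => (hmul₂ _ _).symm, fun a => congr($hT₂ (cocycleL B₁ B₂ a)),
    ⟨⟨1, h₁⟩, ?_, ?_, ?_⟩, ⟨⟨1, h₂⟩, ?_, ?_, ?_⟩⟩
  · rintro _ ⟨a, rfl⟩ _ ⟨b, rfl⟩
    exact ⟨circ B₁ B₂ a b, (hmul₁ a b).symm⟩
  · rintro _ ⟨a, rfl⟩
    exact ⟨comul a, congr($hΔ₁ a).symm⟩
  · rintro _ ⟨a, rfl⟩
    exact ⟨TL B₁ B₂ a, congr($hT₁ a)⟩
  · rintro _ ⟨a, rfl⟩ _ ⟨b, rfl⟩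
    exact ⟨circ B₁ B₂ a b, (hmul₂ a b).symm⟩
  · rintro _ ⟨a, rfl⟩
    exact ⟨comul a, congr($hΔ₂ a).symm⟩
  · rintro _ ⟨a, rfl⟩
    exact ⟨TL B₁ B₂ a, congr($hT₂ a)⟩
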